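/- Let X and Y be Hilbert spaces, T : X → Y a bounded linear operator with a least-squares projection approximation {(X_n, T_n)}. Then the graphs of T_n converge to the graph of T in the product Hilbert space X × Y: s-lim_{n→∞} G(T_n) = w-lim̃_{n→∞} G(T_n) = G(T), where G(S) := {(x, Sx) : x ∈ X}. -/

import Mathlib

/-!
Both graph limits are squeezed between `G(T)` and itself. Every `(x, T x)` is the strong limit of
`(x, Tₙ x)` because `Tₙ → T` strongly. Conversely, if `(xₙ, T_{kₙ} xₙ) ⇀ (x, y)` with `kₙ → ∞`,
then testing against `w` moves the operator to the other side,
`⟪T_{kₙ} xₙ, w⟫ = ⟪xₙ, P_{X_{kₙ}} T* w⟫`, and a weakly convergent sequence (bounded by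
Banach–Steinhaus) paired with a strongly convergent one converges, so `⟪y, w⟫ = ⟪x, T* w⟫ = ⟪T x, w⟫`. Strong limits are weak
limits, which closes the chain.
-/

open Filter Topology Metric Submodule ContinuousLinearMap

open scoped RealInnerProductSpace

/-- Orthogonal projection onto a subspace `K` (as an operator `H →L[ℝ] H`),
defined whenever `K` admits orthogonal projections (e.g. `K` closed). -/
noncomputable def orthProj {H : Type*} [NormedAddCommGroup H] [InnerProductSpace ℝ H]
    (K : Submodule ℝ H) : H →L[ℝ] H :=
  open scoped Classical in
  if h : HasOrthogonalProjection K then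
    haveI := h
    K.subtypeL.comp (orthogonalProjection K)
  else 0

lemma orthProj_eq_starProjection {H : Type*} [NormedAddCommGroup H] [InnerProductSpace ℝ H]
    (K : Submodule ℝ H) [h : HasOrthogonalProjection K] : orthProj K = K.starProjection := by
  simp only [orthProj, dif_pos h]
  rfl

section WeakConvergence

variable {E : Type*} [NormedAddCommGroup E] [InnerProductSpace ℝ E]

lemma exists_norm_le_of_tendsto_inner [CompleteSpace E] {x : ℕ → E} {a : E}
    (hx : ∀ v, Tendsto (fun n => ⟪x n, v⟫) atTop (𝓝 ⟪a, v⟫)) : ∃ C, ∀ n, ‖x n‖ ≤ C := by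
  obtain ⟨C, hC⟩ := banach_steinhaus (g := fun n => innerSL ℝ (x n)) fun v => by
    obtain ⟨C, hC⟩ := (hx v).norm.bddAbove_range
    exact ⟨C, fun n => hC ⟨n, rfl⟩⟩
  exact ⟨C, fun n => by simpa [innerSL_apply_norm] using hC n⟩

lemma tendsto_inner_of_tendsto_inner_of_tendsto [CompleteSpace E] {x v : ℕ → E} {a b : E}
    (hx : ∀ w, Tendsto (fun n => ⟪x n, w⟫) atTop (𝓝 ⟪a, w⟫)) (hv : Tendsto v atTop (𝓝 b)) :
    Tendsto (fun n => ⟪x n, v n⟫) atTop (𝓝 ⟪a, b⟫) := by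
  obtain ⟨C, hC⟩ := exists_norm_le_of_tendsto_inner hx
  have hsmall : Tendsto (fun n => ⟪x n, v n - b⟫) atTop (𝓝 0) := by
    have hdist : Tendsto (fun n => C * ‖v n - b‖) atTop (𝓝 0) := by
      simpa using (tendsto_iff_norm_sub_tendsto_zero.mp hv).const_mul C
    refine squeeze_zero_norm (fun n => ?_) hdist
    exact (norm_inner_le_norm _ _).trans (mul_le_mul_of_nonneg_right (hC n) (norm_nonneg _))
  simpa [inner_sub_right] using (hx b).add hsmall

end WeakConvergence

section GraphLimits

variable {E F : Type*} [NormedAddCommGroup E] [InnerProductSpace ℝ E]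
  [NormedAddCommGroup F] [InnerProductSpace ℝ F]

def graphStrongLimit (A : ℕ → E →L[ℝ] F) : Set (E × F) :=
  {p | ∃ u : ℕ → E × F, (∀ n, (u n).2 = A n (u n).1) ∧ Tendsto u atTop (𝓝 p)}

def graphWeakLimsup (A : ℕ → E →L[ℝ] F) : Set (E × F) :=
  {p | ∃ u : ℕ → E × F, (∀ n, ∃ k, n ≤ k ∧ (u n).2 = A k (u n).1) ∧
    ∀ q : E × F, Tendsto (fun n => ⟪(u n).1, q.1⟫ + ⟪(u n).2, q.2⟫) atTop
      (𝓝 (⟪p.1, q.1⟫ + ⟪p.2, q.2⟫))}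

lemma graph_subset_graphStrongLimit {A : ℕ → E →L[ℝ] F} {B : E →L[ℝ] F}
    (hA : ∀ x, Tendsto (fun n => A n x) atTop (𝓝 (B x))) :
    {p : E × F | p.2 = B p.1} ⊆ graphStrongLimit A := by
  rintro ⟨x, y⟩ (rfl : y = B x)
  exact ⟨fun n => (x, A n x), fun n => rfl, tendsto_const_nhds.prodMk_nhds (hA x)⟩

lemma graphStrongLimit_subset_graphWeakLimsup (A : ℕ → E →L[ℝ] F) :
    graphStrongLimit A ⊆ graphWeakLimsup A := by
  rintro p ⟨u, hu, hlim⟩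
  refine ⟨u, fun n => ⟨n, le_rfl, hu n⟩, fun q => ?_⟩
  exact ((hlim.fst_nhds.inner tendsto_const_nhds).add (hlim.snd_nhds.inner tendsto_const_nhds))

lemma graphWeakLimsup_subset_graph [CompleteSpace E] [CompleteSpace F]
    {A : ℕ → E →L[ℝ] F} {B : E →L[ℝ] F}
    (hA : ∀ w, Tendsto (fun n => adjoint (A n) w) atTop (𝓝 (adjoint B w))) :
    graphWeakLimsup A ⊆ {p : E × F | p.2 = B p.1} := by
  rintro ⟨x, y⟩ ⟨u, hu, hweak⟩
  choose k hk hAk using hu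
  have hfst : ∀ v, Tendsto (fun n => ⟪(u n).1, v⟫) atTop (𝓝 ⟪x, v⟫) := fun v => by
    simpa using hweak (v, 0)
  have hsnd : ∀ w, Tendsto (fun n => ⟪(u n).2, w⟫) atTop (𝓝 ⟪y, w⟫) := fun w => by
    simpa using hweak (0, w)
  refine ext_inner_right ℝ fun w => tendsto_nhds_unique (hsnd w) ?_
  have hadj : Tendsto (fun n => adjoint (A (k n)) w) atTop (𝓝 (adjoint B w)) :=
    (hA w).comp (tendsto_atTop_mono hk tendsto_id)
  simpa [hAk, adjoint_inner_right] using tendsto_inner_of_tendsto_inner_of_tendsto hfst hadj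

end GraphLimits

variable {X Y : Type*} [NormedAddCommGroup X] [InnerProductSpace ℝ X] [CompleteSpace X]
  [NormedAddCommGroup Y] [InnerProductSpace ℝ Y] [CompleteSpace Y]

theorem stmt11_general
    (T : X →L[ℝ] Y) (Xn : ℕ → Submodule ℝ X)
    (hfin : ∀ n, FiniteDimensional ℝ (Xn n))
    (hproj : ∀ x : X, Tendsto (fun n => orthProj (Xn n) x) atTop (𝓝 x))
    (Tn : ℕ → X →L[ℝ] Y) (hTn : ∀ n, Tn n = T.comp (orthProj (Xn n))) :
    ({p : X × Y | ∃ u : ℕ → X × Y,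
        (∀ n, (u n).2 = (Tn n) (u n).1) ∧ Tendsto u atTop (𝓝 p)}
      = {p : X × Y | p.2 = T p.1}) ∧
    ({p : X × Y | ∃ u : ℕ → X × Y,
        (∀ n, ∃ k, n ≤ k ∧ (u n).2 = (Tn k) (u n).1) ∧
        ∀ q : X × Y, Tendsto
          (fun n => (inner ℝ (u n).1 q.1 : ℝ) + (inner ℝ (u n).2 q.2 : ℝ)) atTop
          (𝓝 ((inner ℝ p.1 q.1 : ℝ) + (inner ℝ p.2 q.2 : ℝ)))}
      = {p : X × Y | p.2 = T p.1}) := by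
  have hstrong : ∀ x, Tendsto (fun n => Tn n x) atTop (𝓝 (T x)) := fun x => by
    simp only [hTn, comp_apply]
    exact (T.continuous.tendsto x).comp (hproj x)
  have hadj : ∀ w, Tendsto (fun n => adjoint (Tn n) w) atTop (𝓝 (adjoint T w)) := fun w => by
    have hTn_adj : ∀ n, adjoint (Tn n) = orthProj (Xn n) ∘L adjoint T := fun n => by
      have := hfin n
      rw [hTn, adjoint_comp, orthProj_eq_starProjection, (isSelfAdjoint_starProjection _).adjoint_eq]
    simpa [hTn_adj] using hproj (adjoint T w)
  have hweak_sub := graphWeakLimsup_subset_graph hadj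
  have hgraph_sub := graph_subset_graphStrongLimit hstrong
  have hstrong_sub := graphStrongLimit_subset_graphWeakLimsup Tn
  exact ⟨(hstrong_sub.trans hweak_sub).antisymm hgraph_sub,
    hweak_sub.antisymm (hgraph_sub.trans hstrong_sub)⟩

/-- Graph convergence: `s-lim G(Tₙ) = w-lim̃ G(Tₙ) = G(T)` in `X × Y`. -/
theorem stmt11
    (T : X →L[ℝ] Y) (Xn : ℕ → Submodule ℝ X)
    (hfin : ∀ n, FiniteDimensional ℝ (Xn n))
    (hinf : ¬ FiniteDimensional ℝ X)
    (hproj : ∀ x : X, Tendsto (fun n => orthProj (Xn n) x) atTop (𝓝 x))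
    (Tn : ℕ → X →L[ℝ] Y) (hTn : ∀ n, Tn n = T.comp (orthProj (Xn n))) :
    ({p : X × Y | ∃ u : ℕ → X × Y,
        (∀ n, (u n).2 = (Tn n) (u n).1) ∧ Tendsto u atTop (𝓝 p)}
      = {p : X × Y | p.2 = T p.1}) ∧
    ({p : X × Y | ∃ u : ℕ → X × Y,
        (∀ n, ∃ k, n ≤ k ∧ (u n).2 = (Tn k) (u n).1) ∧
        ∀ q : X × Y, Tendsto
          (fun n => (inner ℝ (u n).1 q.1 : ℝ) + (inner ℝ (u n).2 q.2 : ℝ)) atTop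
          (𝓝 ((inner ℝ p.1 q.1 : ℝ) + (inner ℝ p.2 q.2 : ℝ)))}
      = {p : X × Y | p.2 = T p.1}) :=
  stmt11_general T Xn hfin hproj Tn hTn
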